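/- arXiv:2102.10282 — 6 statements merged into one kernel-verified Lean document; each statement's English description precedes it below -/
import Mathlib

section
/- Let f : X → X be a function on a set X, and let T be a cross-section of ker(f) (a set of representatives of the fibers of f). Then f is unit-regular in the monoid of all functions X → X under composition (i.e., there exists a bijection g : X → X with f ∘ g ∘ f = f, in right-action composition fgf = f) if and only if f is semi-balanced, meaning |X \ T| = |X \ f(X)| for some (equivalently any) cross-section T of ker(f). -/
/-!
On a cross-section `T` of `ker f`, `f` restricts to a bijection `T ≃ range f`. If
`#Tᶜ = #(range f)ᶜ`, the inverse of this bijection extends to a permutation `g` of `X`, and then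
`f (g (f x)) = f x`. Conversely, if `fgf = f` for a permutation `g`, then `g '' range f` is again a
cross-section, and its complement `g '' (range f)ᶜ` has the size of the defect. Any two
cross-sections `T`, `T'` have complements of the same size, since `f` maps both `T \ T'` and
`T' \ T` bijectively onto `range f \ f '' (T ∩ T')`.
-/

open Cardinal Set

universe u v

def IsCrossSection {α β : Type*} (f : α → β) (T : Set α) : Prop :=
  ∀ x, ∃! t, t ∈ T ∧ f t = f x

namespace IsCrossSection

variable {α : Type u} {β : Type v} {f : α → β} {T T' : Set α}

theorem injOn (hT : IsCrossSection f T) : InjOn f T :=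
  fun a ha _ hb hab => (hT a).unique ⟨ha, rfl⟩ ⟨hb, hab.symm⟩

theorem image_eq_range (hT : IsCrossSection f T) : f '' T = range f := by
  refine (image_subset_range f T).antisymm ?_
  rintro _ ⟨x, rfl⟩
  obtain ⟨t, ⟨ht, hft⟩, -⟩ := hT x
  exact ⟨t, ht, hft⟩

theorem bijOn (hT : IsCrossSection f T) : BijOn f T (range f) :=
  hT.image_eq_range ▸ hT.injOn.bijOn_image

theorem mk_diff_comm (hT : IsCrossSection f T) (hT' : IsCrossSection f T') :
    #↥(T \ T') = #↥(T' \ T) := by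
  have mk_diff : ∀ {S S' : Set α}, IsCrossSection f S →
      lift.{v} #↥(S \ S') = lift.{u} #↥(range f \ f '' (S ∩ S')) := by
    intro S S' hS
    rw [← hS.image_eq_range, ← hS.injOn.image_sdiff, mk_image_eq_of_injOn_lift]
    exact hS.injOn.mono sdiff_subset
  rw [← lift_inj.{u, v}, mk_diff hT, mk_diff hT', inter_comm]

theorem mk_compl_eq (hT : IsCrossSection f T) (hT' : IsCrossSection f T') :
    #↥Tᶜ = #↥T'ᶜ := by
  have split : ∀ S S' : Set α, #↥Sᶜ = #↥(S' \ S) + #↥(S ∪ S')ᶜ := by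
    intro S S'
    have hS : Sᶜ = (S' \ S) ∪ (S ∪ S')ᶜ := by
      ext x
      simp only [mem_compl_iff, mem_union, mem_sdiff]
      tauto
    rw [hS, mk_union_of_disjoint]
    exact disjoint_compl_right.mono sdiff_subset (compl_subset_compl.mpr subset_union_right)
  rw [split T T', split T' T, union_comm, hT'.mk_diff_comm hT]

end IsCrossSection

theorem isCrossSection_image_range {α : Type*} {f g : α → α} (hg : ∀ x, f (g (f x)) = f x) :
    IsCrossSection f (g '' range f) := by
  rintro x
  refine ⟨g (f x), ⟨mem_image_of_mem g (mem_range_self x), hg x⟩, ?_⟩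
  rintro _ ⟨⟨_, ⟨y, rfl⟩, rfl⟩, hy⟩
  rw [← hy, hg]

theorem Equiv.Perm.exists_extend_of_mk_compl_eq {α : Type*} {s t : Set α} (e : s ≃ t)
    (h : #↥sᶜ = #↥tᶜ) : ∃ σ : Equiv.Perm α, ∀ x : s, σ x = e x := by
  classical
  obtain ⟨e'⟩ := Cardinal.eq.mp h
  exact ⟨Equiv.subtypeCongr e e', fun x => by simp [Equiv.subtypeCongr]⟩

/-- `f ∈ T(X)` is unit-regular (there is a permutation `g` with `fgf = f`)
iff `f` is semi-balanced, i.e. the collapse `|X \ T|` (for a cross-section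
`T` of `ker f`) equals the defect `|X \ im f|`. -/
theorem stmt_1 {X : Type*} (f : X → X) (T : Set X)
    (hT : ∀ x : X, ∃! t, t ∈ T ∧ f t = f x) :
    (∃ g : X ≃ X, ∀ x, f (g (f x)) = f x) ↔
      Cardinal.mk ↥(Set.univ \ T) = Cardinal.mk ↥(Set.univ \ Set.range f) := by
  have hT : IsCrossSection f T := hT
  simp only [← compl_eq_univ_sdiff]
  constructor
  · rintro ⟨g, hg⟩
    rw [hT.mk_compl_eq (isCrossSection_image_range hg), ← g.image_compl, mk_image_eq g.injective]
  · intro h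
    obtain ⟨g, hg⟩ := Equiv.Perm.exists_extend_of_mk_compl_eq (hT.bijOn.equiv f).symm h.symm
    refine ⟨g, fun x => ?_⟩
    rw [hg ⟨f x, mem_range_self x⟩]
    exact congrArg Subtype.val ((hT.bijOn.equiv f).apply_symm_apply ⟨f x, mem_range_self x⟩)
end

section
/- Every self-map of a set X is semi-balanced (i.e., c(f) = d(f) for all f : X → X) if and only if X is finite. -/
/-!
On a finite set, a cross-section `T` of `ker f` is mapped bijectively onto `im f`, so `T` and
`im f` have the same size and hence so do their complements: collapse equals defect. An infinite
set `X` is Dedekind-infinite (`Option X ≃ X`), so it carries an injective non-surjective self-map;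
its collapse is `0` while its defect is not.
-/

open Cardinal Function Set

universe u v

/-- `T` is a cross-section of `ker f`: it meets every fibre of `f` in exactly one point. -/
def IsKernelTransversal {α : Type u} {β : Type v} (f : α → β) (T : Set α) : Prop :=
  ∀ x, ∃! t, t ∈ T ∧ f t = f x

namespace IsKernelTransversal

variable {α : Type u} {β : Type v} {f : α → β} {T : Set α}

theorem injOn (hT : IsKernelTransversal f T) : InjOn f T := fun t₁ h₁ _ h₂ he =>
  (hT t₁).unique ⟨h₁, rfl⟩ ⟨h₂, he.symm⟩

theorem image_eq_range (hT : IsKernelTransversal f T) : f '' T = range f := by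
  refine (image_subset_range f T).antisymm ?_
  rintro _ ⟨x, rfl⟩
  obtain ⟨t, ⟨htT, hft⟩, -⟩ := hT x
  exact ⟨t, htT, hft⟩

theorem lift_mk_eq (hT : IsKernelTransversal f T) : lift.{v} #T = lift.{u} #(range f) := by
  rw [← hT.image_eq_range, mk_image_eq_of_injOn_lift f T hT.injOn]

theorem mk_diff_eq_mk_diff_range [Finite α] {f : α → α} (hT : IsKernelTransversal f T) :
    #(univ \ T : Set α) = #(univ \ range f : Set α) := by
  simp only [← compl_eq_univ_sdiff]
  exact mk_compl_eq_mk_compl_finite_same (by simpa using hT.lift_mk_eq)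

end IsKernelTransversal

theorem isKernelTransversal_univ {α : Type u} {β : Type v} {f : α → β} (hf : Injective f) :
    IsKernelTransversal f univ := fun x =>
  ⟨x, ⟨trivial, rfl⟩, fun _ ht => hf ht.2⟩

theorem Infinite.exists_injective_not_surjective (α : Type u) [Infinite α] :
    ∃ f : α → α, Injective f ∧ ¬Surjective f := by
  obtain ⟨e⟩ : Nonempty (Option α ≃ α) := Cardinal.eq.1 (mk_option.trans mk_add_one_eq)
  refine ⟨e ∘ some, e.injective.comp (Option.some_injective α), fun hsurj => ?_⟩
  obtain ⟨x, hx⟩ := hsurj (e none)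
  exact Option.some_ne_none x (e.injective hx)

/-- Every self-map of `X` is semi-balanced (collapse equals defect) iff `X`
is finite. -/
theorem stmt_3 {X : Type*} :
    (∀ f : X → X, ∀ T : Set X, (∀ x : X, ∃! t, t ∈ T ∧ f t = f x) →
        Cardinal.mk ↥(Set.univ \ T) = Cardinal.mk ↥(Set.univ \ Set.range f)) ↔
      Finite X := by
  refine ⟨fun h => ?_, fun _ f T hT => IsKernelTransversal.mk_diff_eq_mk_diff_range hT⟩
  by_contra hfin
  have : Infinite X := not_finite_iff_infinite.mp hfin
  obtain ⟨f, hinj, hsurj⟩ := Infinite.exists_injective_not_surjective X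
  have hdefect : #(univ \ range f : Set X) = 0 := by
    rw [← h f univ (isKernelTransversal_univ hinj), sdiff_self]
    exact mk_eq_zero _
  rw [mk_set_eq_zero_iff, sdiff_eq_empty, univ_subset_iff, range_eq_univ] at hdefect
  exact hsurj hdefect
end

section
/- The full transformation monoid T(X) on a set X is unit-regular (every element f satisfies f = f g f for some permutation g of X) if and only if X is finite. -/
/-!
A unit-regular surjection `f = f g f` is injective, since `f ∘ g = id` forces `f = g⁻¹`.
An infinite set `X` satisfies `X ≃ Option X`, and collapsing the extra point onto another one
gives a surjection of `X` that is not injective. Conversely, if `f` has finite range, pick a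
preimage of each point of the range; the resulting injection of the range into `X` extends to a
permutation `g`, because complements of equinumerous finite subsets are equinumerous, and
then `f (g (f x)) = f x`.
-/

open Function

section

variable {X : Type*}

def IsUnitRegular (f : X → X) : Prop :=
  ∃ g : Equiv.Perm X, ∀ x, f (g (f x)) = f x

theorem IsUnitRegular.injective_of_surjective {f : X → X} (hf : IsUnitRegular f)
    (hsurj : Surjective f) : Injective f := by
  obtain ⟨g, hg⟩ := hf
  have hright : RightInverse g f := hsurj.forall.2 hg
  have hfg : f = g.symm := funext fun x => by simpa using hright (g.symm x)
  exact hfg ▸ g.symm.injective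

theorem isUnitRegular_of_finite_range (f : X → X) [Finite (Set.range f)] :
    IsUnitRegular f := by
  classical
  have : Finite {x | x ∈ Set.range f} := ‹Finite (Set.range f)›
  let s : Set.range f → X := fun y => y.2.choose
  have hs : ∀ y, f (s y) = y := fun y => y.2.choose_spec
  have hs_inj : Injective s := fun a b hab => Subtype.ext <| by rw [← hs a, ← hs b, hab]
  refine ⟨(Equiv.ofInjective s hs_inj).extendSubtype, fun x => ?_⟩
  rw [Equiv.extendSubtype_apply_of_mem _ (f x) (Set.mem_range_self x)]
  exact hs ⟨f x, _⟩

theorem exists_surjective_not_injective [Infinite X] :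
    ∃ f : X → X, Surjective f ∧ ¬Injective f := by
  obtain ⟨e⟩ : Nonempty (Option X ≃ X) := Cardinal.eq.1 <| by
    rw [Cardinal.mk_option, Cardinal.add_one_eq (Cardinal.aleph0_le_mk X)]
  obtain ⟨x₀⟩ := Infinite.nonempty X
  refine ⟨fun x => (e.symm x).getD x₀, fun y => ⟨e (some y), by simp⟩, fun hinj => ?_⟩
  have : e none = e (some x₀) := hinj (by simp)
  exact Option.some_ne_none x₀ (e.injective this).symm

end

/-- The full transformation monoid `T(X)` is unit-regular iff `X` is finite. -/
theorem stmt_4 {X : Type*} :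
    (∀ f : X → X, ∃ g : X ≃ X, ∀ x, f (g (f x)) = f x) ↔ Finite X := by
  refine ⟨fun h => ?_, fun _ f => isUnitRegular_of_finite_range f⟩
  by_contra hfin
  have : Infinite X := not_finite_iff_infinite.1 hfin
  obtain ⟨f, hsurj, hninj⟩ := exists_surjective_not_injective (X := X)
  exact hninj (IsUnitRegular.injective_of_surjective (h f) hsurj)
end

section
/- Let X be a finite set and f : X → X. The number of permutations g of X satisfying f ∘ g ∘ f = f (written fgf = f in right-action composition) equals d(f)! · ∏_{y ∈ im(f)} |f⁻¹({y})|, where d(f) = |X \ im(f)|. -/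
/-!
A permutation `g` satisfies `f g f = f` exactly when it sends every `y ∈ im f` into the fiber
`f⁻¹(y)`. Restricting such a `g` to `im f` therefore gives a choice of one point in each fiber,
`∏ |f⁻¹(y)|` choices in all, and each such choice is injective because the fibers are disjoint.
The permutations with a prescribed injective restriction to `im f` form a left coset of the
pointwise stabilizer of `im f`, which is the permutation group of the complement of `im f`, of
order `d(f)!`.
-/

section

open Equiv Function

variable {α : Type*} [Finite α]

theorem Equiv.Perm.card_extending_injective (s : Set α) (u : s → α) (hu : Injective u) :
    Nat.card {g : Perm α // ∀ x : s, g x = u x} = (Nat.card ↥sᶜ).factorial := by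
  classical
  obtain ⟨g₀, hg₀⟩ := Perm.exists_extending_pair (↑) u Subtype.val_injective hu
  have hcoset : ∀ g : Perm α, (∀ x : s, g x = u x) ↔ ∀ a, a ∉ sᶜ → (g₀⁻¹ * g) a = a := by
    intro g
    simp only [Perm.mul_apply, Perm.inv_eq_iff_eq, Set.mem_compl_iff, not_not]
    exact ⟨fun h a ha => (h ⟨a, ha⟩).trans (hg₀ ⟨a, ha⟩).symm,
      fun h x => (h x x.2).trans (hg₀ x)⟩
  rw [Nat.card_congr
      ((Equiv.mulLeft g₀⁻¹).subtypeEquiv (q := fun h => ∀ a, a ∉ sᶜ → h a = a) hcoset),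
    ← Nat.card_congr (Perm.subtypeEquivSubtypePerm (· ∈ sᶜ)), Nat.card_perm]

theorem Equiv.Perm.card_forall_mem_eq_card_pi_mul (s : Set α) (t : s → Set α)
    (ht : Pairwise (_root_.Disjoint on t)) :
    Nat.card {g : Perm α // ∀ y : s, g y ∈ t y} =
      Nat.card (∀ y : s, t y) * (Nat.card ↥sᶜ).factorial := by
  let restrict : {g : Perm α // ∀ y : s, g y ∈ t y} → ∀ y : s, t y :=
    fun g y => ⟨g.1 y, g.2 y⟩
  have hfiber : ∀ σ : ∀ y : s, t y,
      Nat.card {g // restrict g = σ} = (Nat.card ↥sᶜ).factorial := by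
    intro σ
    have hσ : Injective fun y => (σ y : α) := fun y z (hyz : (σ y : α) = σ z) =>
      ht.eq (Set.not_disjoint_iff.2 ⟨_, (σ y).2, hyz ▸ (σ z).2⟩)
    rw [← Perm.card_extending_injective s _ hσ]
    exact Nat.card_congr
      { toFun := fun g => ⟨g.1.1, fun y => congrArg Subtype.val (congrFun g.2 y)⟩
        invFun := fun g => ⟨⟨g.1, fun y => g.2 y ▸ (σ y).2⟩, funext fun y => Subtype.ext (g.2 y)⟩
        left_inv := fun _ => rfl
        right_inv := fun _ => rfl }
  have := Fintype.ofFinite α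
  classical
  rw [← Nat.card_congr (Equiv.sigmaFiberEquiv restrict), Nat.card_sigma,
    Finset.sum_congr rfl fun σ _ => hfiber σ, Finset.sum_const, Finset.card_univ, smul_eq_mul,
    ← Nat.card_eq_fintype_card]

end

/-- For finite `X` and `f : X → X`, the number of permutations `g` with
`fgf = f` equals `d(f)! · ∏_{y ∈ im f} |f⁻¹(y)|`. -/
theorem stmt_5 {X : Type*} [Fintype X] [DecidableEq X] (f : X → X) :
    Nat.card {g : Equiv.Perm X // ∀ x, f (g (f x)) = f x} =
      (Nat.card ↥(Set.univ \ Set.range f)).factorial *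
        ∏ y ∈ Finset.univ.image f, (Finset.univ.filter fun x => f x = y).card := by
  have hfibers : ∀ g : Equiv.Perm X,
      (∀ x, f (g (f x)) = f x) ↔ ∀ y : Set.range f, g y ∈ f ⁻¹' {(y : X)} := by
    intro g
    simp only [Set.mem_preimage, Set.mem_singleton_iff, Subtype.forall, Set.forall_mem_range]
  rw [Nat.card_congr (Equiv.subtypeEquivRight hfibers),
    Equiv.Perm.card_forall_mem_eq_card_pi_mul _ _
      ((pairwise_disjoint_fiber f).comp_of_injective Subtype.val_injective),
    mul_comm, ← Set.compl_eq_univ_sdiff, Nat.card_pi, ← Set.toFinset_range,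
    ← Finset.prod_set_coe]
  congr 1
  refine Finset.prod_congr rfl fun y _ => ?_
  change Nat.card {x // f x = y} = _
  rw [Nat.card_eq_fintype_card, Fintype.card_subtype]
end

section
/- Let 𝒫 = {X_i : i ∈ I} be a partition of X. If f is unit-regular in T(X,𝒫), i.e., f = f g f for some unit g of T(X,𝒫), then the character χ^(f) : I → I is unit-regular in T(I), i.e., χ^(f) = χ^(f) ∘' σ ∘' χ^(f) for some permutation σ of I (where ∘' denotes right-action composition). -/
/-!
A unit `g` of `T(X, 𝒫)` moves blocks onto blocks, so its character is a permutation `σ` of `I`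
(the character of `g⁻¹ g = id` is both `χ(g⁻¹) ∘ σ` and the identity). Since blocks are nonempty
and disjoint, a map sending a block into a block determines the target block, so characters
are multiplicative and `χ(f) = χ(f g f) = χ(f) ∘ σ ∘ χ(f)`.
-/

/-- `B` is a partition of `X` into nonempty pairwise disjoint blocks. -/
def IsBlockPartition {X I : Type*} (B : I → Set X) : Prop :=
  (∀ i, (B i).Nonempty) ∧ (∀ i j, i ≠ j → Disjoint (B i) (B j)) ∧ ∀ x, ∃ i, x ∈ B i

/-- `f` preserves the partition `B`: each block maps into some block. -/
def Preserves {X I : Type*} (B : I → Set X) (f : X → X) : Prop :=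
  ∀ i, ∃ j, f '' B i ⊆ B j

/-- `f` is unit-regular in `T(X,𝒫)`: there is a unit `g` (a `𝒫`-preserving
bijection whose inverse preserves `𝒫`) with `fgf = f` (right-action
composition). -/
def URegP {X I : Type*} (B : I → Set X) (f : X → X) : Prop :=
  ∃ g : X ≃ X, Preserves B g ∧ Preserves B g.symm ∧ ∀ x, f (g (f x)) = f x

/-- The induced block map `f_i : X_i → X_j` has collapse equal to defect:
for some cross-section `T` of its kernel, `|X_i \ T| = |X_j \ f(X_i)|`. -/
def BlockSemiBalanced {X I : Type*} (B : I → Set X) (f : X → X) (i j : I) : Prop :=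
  ∃ T ⊆ B i, (∀ x ∈ B i, ∃! t, t ∈ T ∧ f t = f x) ∧
    Cardinal.mk ↥(B i \ T) = Cardinal.mk ↥(B j \ f '' B i)

open Set

section

variable {X I : Type*} {B : I → Set X}

namespace Preserves

variable {f : X → X}

/-- A chosen target block; it is the character `χ^(f)` because, in a partition, the target
block is unique (`IsBlockPartition.eq_of_mapsTo`). -/
noncomputable def character (hf : Preserves B f) (i : I) : I :=
  (hf i).choose

theorem mapsTo_character (hf : Preserves B f) (i : I) : MapsTo f (B i) (B (hf.character i)) :=
  mapsTo_iff_image_subset.2 (hf i).choose_spec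

end Preserves

namespace IsBlockPartition

theorem eq_of_mem (hP : IsBlockPartition B) {i j : I} {x : X} (hi : x ∈ B i) (hj : x ∈ B j) :
    i = j := by
  by_contra hij
  exact (hP.2.1 i j hij).ne_of_mem hi hj rfl

theorem eq_of_mapsTo (hP : IsBlockPartition B) {f : X → X} {i j k : I}
    (hj : MapsTo f (B i) (B j)) (hk : MapsTo f (B i) (B k)) : j = k :=
  let ⟨_, hx⟩ := hP.1 i
  hP.eq_of_mem (hj hx) (hk hx)

theorem character_character_symm (hP : IsBlockPartition B) {g : X ≃ X} (hg : Preserves B g)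
    (hg' : Preserves B g.symm) (i : I) : hg'.character (hg.character i) = i :=
  hP.eq_of_mapsTo ((hg'.mapsTo_character _).comp (hg.mapsTo_character i))
    (by simpa only [Equiv.symm_comp_self] using mapsTo_id (B i))

noncomputable def unitCharacter (hP : IsBlockPartition B) (g : X ≃ X) (hg : Preserves B g)
    (hg' : Preserves B g.symm) : I ≃ I where
  toFun := hg.character
  invFun := hg'.character
  left_inv := hP.character_character_symm hg hg'
  right_inv := hP.character_character_symm (g := g.symm) hg' hg

theorem mapsTo_unitCharacter (hP : IsBlockPartition B) {g : X ≃ X} (hg : Preserves B g)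
    (hg' : Preserves B g.symm) (i : I) : MapsTo g (B i) (B (hP.unitCharacter g hg hg' i)) :=
  hg.mapsTo_character i

end IsBlockPartition

end

/-- If `f` is unit-regular in `T(X,𝒫)`, then its character `χf` is
unit-regular in `T(I)`. -/
theorem stmt_12 {X I : Type*} (B : I → Set X) (hP : IsBlockPartition B)
    (f : X → X) (χf : I → I) (hχf : ∀ i, f '' B i ⊆ B (χf i))
    (h : URegP B f) :
    ∃ σ : I ≃ I, ∀ i, χf (σ (χf i)) = χf i := by
  obtain ⟨g, hg, hg', hfgf⟩ := h
  refine ⟨hP.unitCharacter g hg hg', fun i => ?_⟩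
  have hχ (i : I) : MapsTo f (B i) (B (χf i)) := mapsTo_iff_image_subset.2 (hχf i)
  have hfgf_maps : MapsTo (fun x => f (g (f x))) (B i) (B (χf i)) := by
    simpa only [hfgf] using hχ i
  exact hP.eq_of_mapsTo ((hχ _).comp ((hP.mapsTo_unitCharacter hg hg' _).comp (hχ i))) hfgf_maps
end

section
/- Let 𝒫 = {X_i : i ∈ I} be a partition of X and f ∈ Σ(X,𝒫) = {f ∈ T(X,𝒫) : f(X) meets every block}. Then f is unit-regular in Σ(X,𝒫) if and only if (i) χ^(f) : I → I is injective, and (ii) whenever χ^(f)(i) = j we have |X_i| = |X_j| and c(f_i) = d(f_i), where f_i : X_i → X_j is the induced block map. -/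
/-!
A unit `g` of `T(X,𝒫)` permutes the blocks, and `fgf = f` forces this permutation to invert
`χ^(f)`, which is onto because `f ∈ Σ(X,𝒫)`. So `g` maps `X_{χ(i)}` bijectively onto `X_i`;
then `g(f(X_i))` is a cross-section of `ker f_i` whose complement in `X_i` is the image under `g`
of `X_{χ(i)} \ f(X_i)`. Conversely, a cross-section `T_i` of `ker f_i` with
`|X_i \ T_i| = |X_{χ(i)} \ f(X_i)|` yields a bijection `X_{χ(i)} → X_i` inverting `f` on
`f(X_i)`; since `χ^(f)` permutes the blocks, these glue to a unit `g` with `fgf = f`.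
-/

open Set Function Cardinal

section BlockMap

variable {X : Type*} {f g : X → X} {A C : Set X}

theorem Equiv.exists_bijOn_extension {s t : Set X} (e : s ≃ t) :
    ∃ g : X → X, BijOn g s t ∧ ∀ x : s, g x = e x := by
  classical
  let g : X → X := fun x => if h : x ∈ s then e ⟨x, h⟩ else x
  have hg : ∀ x : s, g x = e x := fun x => dif_pos x.2
  refine ⟨g, ⟨fun x hx => ?_, fun x hx y hy hxy => ?_, fun y hy => ?_⟩, hg⟩
  · simpa only [hg ⟨x, hx⟩] using (e ⟨x, hx⟩).2
  · rw [hg ⟨x, hx⟩, hg ⟨y, hy⟩] at hxy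
    simpa using e.injective (Subtype.ext hxy)
  · exact ⟨e.symm ⟨y, hy⟩, (e.symm ⟨y, hy⟩).2, by simp [hg]⟩

theorem exists_crossSection_of_bijOn (hf : f '' A ⊆ C) (hg : BijOn g C A)
    (hfgf : ∀ x ∈ A, f (g (f x)) = f x) :
    ∃ T ⊆ A, (∀ x ∈ A, ∃! t, t ∈ T ∧ f t = f x) ∧ #↥(A \ T) = #↥(C \ f '' A) := by
  refine ⟨g '' (f '' A), (image_mono hf).trans hg.image_eq.subset, fun x hx => ?_, ?_⟩
  · refine ⟨g (f x), ⟨mem_image_of_mem g (mem_image_of_mem f hx), hfgf x hx⟩, ?_⟩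
    rintro _ ⟨⟨_, ⟨y, hy, rfl⟩, rfl⟩, hfy⟩
    rw [← hfy, hfgf y hy]
  · have hcompl : g '' (C \ f '' A) = A \ g '' (f '' A) := by
      rw [hg.injOn.image_sdiff_subset hf, hg.image_eq]
    rw [← hcompl, mk_image_eq_of_injOn _ _ (hg.injOn.mono sdiff_subset)]

theorem exists_bijOn_of_crossSection {T : Set X} (hf : f '' A ⊆ C) (hTA : T ⊆ A)
    (hT : ∀ x ∈ A, ∃! t, t ∈ T ∧ f t = f x) (hcard : #↥(A \ T) = #↥(C \ f '' A)) :
    ∃ g : X → X, BijOn g C A ∧ ∀ x ∈ A, f (g (f x)) = f x := by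
  classical
  have hfT : BijOn f T (f '' A) := by
    refine ⟨fun t ht => mem_image_of_mem f (hTA ht), fun s hs t ht hst => ?_, ?_⟩
    · obtain ⟨u, -, hu⟩ := hT t (hTA ht)
      rw [hu s ⟨hs, hst⟩, hu t ⟨ht, rfl⟩]
    · rintro _ ⟨x, hx, rfl⟩
      obtain ⟨t, ⟨ht, hft⟩, -⟩ := hT x hx
      exact ⟨t, ht, hft⟩
  obtain ⟨e⟩ := Cardinal.eq.mp hcard
  -- `C = f(A) ⊔ (C \ f(A))` and `A = T ⊔ (A \ T)`; match `f(A)` with `T` through `f`.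
  let ψ : C ≃ A := (Equiv.Set.sumDiffSubset hf).symm.trans
    ((Equiv.sumCongr (hfT.equiv f).symm e.symm).trans (Equiv.Set.sumDiffSubset hTA))
  obtain ⟨g, hg, hgψ⟩ := ψ.exists_bijOn_extension
  refine ⟨g, hg, fun x hx => ?_⟩
  have hfx : f x ∈ f '' A := mem_image_of_mem f hx
  rw [hgψ ⟨f x, hf hfx⟩]
  simp only [ψ, Equiv.trans_apply, Equiv.Set.sumDiffSubset_apply_inl, Equiv.sumCongr_apply,
    Equiv.Set.sumDiffSubset_symm_apply_of_mem (x := ⟨f x, hf hfx⟩) _ hfx, Sum.map_inl, coe_inclusion]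
  exact congrArg Subtype.val ((hfT.equiv f).apply_symm_apply ⟨f x, hfx⟩)

end BlockMap

namespace IndexedPartition

variable {ι κ X : Type*} {B : ι → Set X}

def reindex (hB : IndexedPartition B) (σ : κ ≃ ι) : IndexedPartition (B ∘ σ) where
  eq_of_mem hi hj := σ.injective (hB.eq_of_mem hi hj)
  some := hB.some ∘ σ
  some_mem i := hB.some_mem (σ i)
  index := σ.symm ∘ hB.index
  mem_index x := by simpa using hB.mem_index x

theorem surjective_of_range_inter_nonempty (hB : IndexedPartition B) {f : X → X} {χ : ι → ι}
    (hχ : ∀ i, f '' B i ⊆ B (χ i)) (hf : ∀ i, (range f ∩ B i).Nonempty) : Surjective χ := by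
  intro j
  obtain ⟨_, ⟨x, rfl⟩, hx⟩ := hf j
  exact ⟨hB.index x, hB.eq_of_mem (hχ _ (mem_image_of_mem f (hB.mem_index x))) hx⟩

theorem preserves_and_preserves_symm_iff (hB : IndexedPartition B) (g : X ≃ X) :
    Preserves B g ∧ Preserves B g.symm ↔ ∃ σ : ι ≃ ι, ∀ i, g '' B (σ i) = B i := by
  constructor
  · rintro ⟨hg, hg'⟩
    choose τ hτ using hg
    choose τ' hτ' using hg'
    have inv : ∀ (u : X ≃ X) (τ τ' : ι → ι), (∀ i, u '' B i ⊆ B (τ i)) →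
        (∀ i, u.symm '' B i ⊆ B (τ' i)) → ∀ i, τ' (τ i) = i := by
      intro u τ τ' h h' i
      refine hB.eq_of_mem ?_ (hB.some_mem i)
      simpa using h' (τ i) (mem_image_of_mem _ (h i (mem_image_of_mem u (hB.some_mem i))))
    have hττ' := inv g.symm τ' τ (by simpa using hτ') hτ
    refine ⟨⟨τ', τ, hττ', inv g τ τ' hτ hτ'⟩, fun i => subset_antisymm ?_ fun y hy => ?_⟩
    · simpa [hττ'] using hτ (τ' i)
    · exact ⟨g.symm y, hτ' i (mem_image_of_mem _ hy), g.apply_symm_apply y⟩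
  · rintro ⟨σ, hσ⟩
    refine ⟨fun j => ⟨σ.symm j, ?_⟩, fun i => ⟨σ i, ?_⟩⟩
    · rw [← hσ (σ.symm j), σ.apply_symm_apply]
    · rw [← hσ i, Equiv.symm_image_image]

theorem eq_of_image_subset_of_comp_eq (hB : IndexedPartition B) {f g : X → X} {χ σ : ι → ι}
    (hχ : ∀ i, f '' B i ⊆ B (χ i)) (hχsurj : Surjective χ) (hσ : ∀ i, g '' B (σ i) ⊆ B i)
    (hfgf : ∀ x, f (g (f x)) = f x) : σ = χ := by
  funext i
  obtain ⟨k, hk⟩ := hχsurj (σ i)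
  have hfx : f (hB.some k) ∈ B (σ i) := hk ▸ hχ k (mem_image_of_mem f (hB.some_mem k))
  have hgfx : g (f (hB.some k)) ∈ B i := hσ i (mem_image_of_mem g hfx)
  exact hB.eq_of_mem hfx (hfgf _ ▸ hχ i (mem_image_of_mem f hgfx))

theorem exists_equiv_eqOn (hB : IndexedPartition B) (σ : ι ≃ ι) (g : ι → X → X)
    (hg : ∀ i, BijOn (g i) (B (σ i)) (B i)) : ∃ e : X ≃ X, ∀ i, EqOn e (g i) (B (σ i)) := by
  let hBσ := hB.reindex σ
  refine ⟨Equiv.ofBijective _ (hBσ.piecewise_bij hB hg), fun i x hx => ?_⟩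
  rw [Equiv.ofBijective_apply, piecewise_apply, hBσ.mem_iff_index_eq.mp hx]

end IndexedPartition

noncomputable def IsBlockPartition.toIndexedPartition {X I : Type*} {B : I → Set X}
    (hP : IsBlockPartition B) : IndexedPartition B :=
  .mk' B (fun i j hij => hP.2.1 i j hij) hP.1 hP.2.2

/-- Characterization of unit-regular elements of `Σ(X,𝒫)` (whose units are
those of `T(X,𝒫)`). -/
theorem stmt_15 {X I : Type*} (B : I → Set X) (hP : IsBlockPartition B)
    (f : X → X) (χf : I → I) (hχf : ∀ i, f '' B i ⊆ B (χf i))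
    (hSig : ∀ i, (Set.range f ∩ B i).Nonempty) :
    URegP B f ↔
      Function.Injective χf ∧
        ∀ i, Cardinal.mk ↥(B i) = Cardinal.mk ↥(B (χf i)) ∧
          BlockSemiBalanced B f i (χf i) := by
  have hB := hP.toIndexedPartition
  have hsurj : Surjective χf := hB.surjective_of_range_inter_nonempty hχf hSig
  constructor
  · rintro ⟨g, hg, hg', hfgf⟩
    obtain ⟨σ, hσ⟩ := (hB.preserves_and_preserves_symm_iff g).1 ⟨hg, hg'⟩
    obtain rfl : ⇑σ = χf :=
      hB.eq_of_image_subset_of_comp_eq hχf hsurj (fun i => (hσ i).subset) hfgf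
    refine ⟨σ.injective, fun i => ⟨?_, ?_⟩⟩
    · rw [← hσ i, mk_image_eq g.injective]
    · exact exists_crossSection_of_bijOn (hχf i) (g.image_eq_iff_bijOn.1 (hσ i))
        fun x _ => hfgf x
  · rintro ⟨hinj, hbal⟩
    choose T hTA hT hcard using fun i => (hbal i).2
    choose g hg hfgf using fun i => exists_bijOn_of_crossSection (hχf i) (hTA i) (hT i) (hcard i)
    obtain ⟨e, he⟩ := hB.exists_equiv_eqOn (.ofBijective χf ⟨hinj, hsurj⟩) g hg
    obtain ⟨he₁, he₂⟩ := (hB.preserves_and_preserves_symm_iff e).2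
      ⟨.ofBijective χf ⟨hinj, hsurj⟩, fun i => ((he i).image_eq).trans (hg i).image_eq⟩
    refine ⟨e, he₁, he₂, fun x => ?_⟩
    have hfx := hχf _ (mem_image_of_mem f (hB.mem_index x))
    rw [he _ hfx, hfgf _ x (hB.mem_index x)]
end
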